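/- arXiv:2603.09491 — 4 statements merged into one kernel-verified Lean document; each statement's English description precedes it below -/
import Mathlib

section
/- Let n and k be natural numbers with k ≤ n. Then the k-th entry of the h-vector of the complex of injective words on n letters satisfies, as an identity of rational numbers: ∑_{i=0}^{k} (-1)^{k-i} · C(n-i, k-i) · (C(n,i) · i!) = (∑_{i=0}^{k} (-1)^{k-i} / (k-i)!) · (n! / (n-k)!). -/
/-- For `k ≤ n`, the `k`-th entry of the h-vector of the complex of
injective words on `n` letters (computed from the f-vector `f_{i-1} = C(n,i)·i!`)
satisfies, as rationals,
`∑_{i=0}^{k} (-1)^{k-i} C(n-i,k-i) (C(n,i) i!) = (∑_{i=0}^{k} (-1)^{k-i}/(k-i)!) · n!/(n-k)!`. -/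
theorem hVector_injective_words_eq (n k : ℕ) (hkn : k ≤ n) :
    ∑ i ∈ Finset.range (k + 1),
        (-1 : ℚ) ^ (k - i) * ((n - i).choose (k - i) : ℚ) *
          ((n.choose i : ℚ) * (Nat.factorial i : ℚ)) =
      (∑ i ∈ Finset.range (k + 1), (-1 : ℚ) ^ (k - i) / (Nat.factorial (k - i) : ℚ)) *
        ((Nat.factorial n : ℚ) / (Nat.factorial (n - k) : ℚ)) := by
  rw [Finset.sum_mul]
  refine Finset.sum_congr rfl fun i hi => ?_
  have hik : i ≤ k := Nat.lt_succ_iff.mp (Finset.mem_range.mp hi)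
  have hin : i ≤ n := hik.trans hkn
  have h1 : k - i ≤ n - i := Nat.sub_le_sub_right hkn i
  rw [Nat.cast_choose ℚ h1, Nat.cast_choose ℚ hin]
  have h2 : n - i - (k - i) = n - k := by omega
  rw [h2]
  have f0 : (Nat.factorial (k - i) : ℚ) ≠ 0 := Nat.cast_ne_zero.mpr (Nat.factorial_ne_zero _)
  have f1 : (Nat.factorial (n - k) : ℚ) ≠ 0 := Nat.cast_ne_zero.mpr (Nat.factorial_ne_zero _)
  have f2 : (Nat.factorial i : ℚ) ≠ 0 := Nat.cast_ne_zero.mpr (Nat.factorial_ne_zero _)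
  have f3 : (Nat.factorial (n - i) : ℚ) ≠ 0 := Nat.cast_ne_zero.mpr (Nat.factorial_ne_zero _)
  field_simp
end

section
/- Let n and k be natural numbers with k ≤ n. Then the k-th entry of the h-vector of the complex of injective words on n letters equals the number of derangements of a k-element set times the binomial coefficient C(n,k); that is, as an identity of integers: ∑_{i=0}^{k} (-1)^{k-i} · C(n-i, k-i) · (C(n,i) · i!) = d(k) · C(n,k), where d(k) is the number of derangements of a k-element set. -/
open Nat in

lemma hVec_term (n k i : ℕ) (hik : i ≤ k) (hkn : k ≤ n) :
    (n - i).choose (k - i) * (n.choose i * Nat.factorial i) =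
      Nat.ascFactorial (k - i + 1) i * n.choose k := by
  have h1 : (k - i)! * (k - i + 1).ascFactorial i = k ! := by
    have := Nat.factorial_mul_ascFactorial (k - i) i
    rwa [Nat.sub_add_cancel hik] at this
  have h2 : (n - i).choose (k - i) * (k - i)! * (n - k)! = (n - i)! := by
    have := Nat.choose_mul_factorial_mul_factorial (Nat.sub_le_sub_right hkn i)
    rwa [Nat.sub_sub_sub_cancel_right hik] at this
  have h3 : n.choose i * i ! * (n - i)! = n ! :=
    Nat.choose_mul_factorial_mul_factorial (hik.trans hkn)
  have h4 : n.choose k * k ! * (n - k)! = n ! :=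
    Nat.choose_mul_factorial_mul_factorial hkn
  have key : ((n - i).choose (k - i) * (n.choose i * i !)) * ((k - i)! * (n - k)!) =
      ((k - i + 1).ascFactorial i * n.choose k) * ((k - i)! * (n - k)!) := by
    calc ((n - i).choose (k - i) * (n.choose i * i !)) * ((k - i)! * (n - k)!)
        = (n.choose i * i !) * ((n - i).choose (k - i) * (k - i)! * (n - k)!) := by ring
      _ = n ! := by rw [h2]; rw [← h3]
      _ = ((k - i + 1).ascFactorial i * n.choose k) * ((k - i)! * (n - k)!) := by
          rw [← h4, ← h1]; ring
  have hpos : 0 < (k - i)! * (n - k)! :=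
    Nat.mul_pos (Nat.factorial_pos _) (Nat.factorial_pos _)
  exact Nat.eq_of_mul_eq_mul_right hpos key

/-- For `k ≤ n`, the `k`-th entry of the h-vector of the complex of
injective words on `n` letters equals `d(k) · C(n,k)`, as integers:
`∑_{i=0}^{k} (-1)^{k-i} C(n-i,k-i) (C(n,i) i!) = numDerangements k · C(n,k)`. -/
theorem hVector_eq_numDerangements_mul_choose (n k : ℕ) (hkn : k ≤ n) :
    ∑ i ∈ Finset.range (k + 1),
        (-1 : ℤ) ^ (k - i) * ((n - i).choose (k - i) : ℤ) *
          ((n.choose i : ℤ) * (Nat.factorial i : ℤ)) =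
      (numDerangements k : ℤ) * (n.choose k : ℤ) := by
  rw [numDerangements_sum, Finset.sum_mul, ← Finset.sum_range_reflect]
  apply Finset.sum_congr rfl
  intro i hi
  have hik : i ≤ k := Nat.lt_succ_iff.mp (Finset.mem_range.mp hi)
  have h := hVec_term n k (k - i) (Nat.sub_le k i) hkn
  rw [Nat.sub_sub_self hik] at h
  simp only [Nat.add_sub_cancel, Nat.sub_sub_self hik]
  rw [mul_assoc, mul_assoc]
  congr 1
  exact_mod_cast h
end

section
/- Let α be a type and let l be a duplicate-free list with entries in α. Then the poset of sublists of l, i.e. the subtype {l' : List α // l' is a sublist of l} partially ordered by the sublist relation, is order-isomorphic to the poset Finset (Fin l.length) of finite subsets of the index set of l, partially ordered by inclusion. In particular, the lower segment below any simplex in the face poset of an ordered simplicial complex is the face poset of a simplex, so such face posets are simplicial posets. -/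
private theorem filter_mem_eq_of_sublist {α : Type*} [DecidableEq α] :
    ∀ {l l' : List α}, l.Nodup → l'.Sublist l → l.filter (· ∈ l') = l'
  | _, _, _, List.Sublist.slnil => rfl
  | a :: l, l', hl, List.Sublist.cons _ h => by
      have ha : a ∉ l' := fun hmem => (List.nodup_cons.mp hl).1 (h.subset hmem)
      simp only [List.filter_cons, decide_eq_true_eq]
      rw [if_neg (by simpa using ha)]
      exact filter_mem_eq_of_sublist (List.nodup_cons.mp hl).2 h
  | a :: l, _, hl, List.Sublist.cons_cons _ (l₁ := l') h => by
      have ha : a ∉ l := (List.nodup_cons.mp hl).1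
      simp only [List.filter_cons]
      rw [if_pos (by simp)]
      congr 1
      rw [List.filter_congr (q := fun x => decide (x ∈ l')) (fun x hx => by
        have hxa : x ≠ a := fun h' => ha (h' ▸ hx)
        simp [hxa])]
      exact filter_mem_eq_of_sublist (List.nodup_cons.mp hl).2 h

/-- For a duplicate-free list `l`, the poset of sublists of `l`
(ordered by the sublist relation) is order-isomorphic to the Boolean lattice
`Finset (Fin l.length)` ordered by inclusion; i.e. lower segments in face posets
of ordered simplicial complexes are face posets of simplices. -/
theorem sublist_poset_iso_finset (α : Type*) (l : List α) (hl : l.Nodup) :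
    Nonempty
      ((fun a b : {l' : List α // l'.Sublist l} => a.1.Sublist b.1) ≃r
        (fun s t : Finset (Fin l.length) => s ⊆ t)) := by
  classical
  have hget : Function.Injective l.get := List.nodup_iff_injective_get.mp hl
  have hmapget : (List.finRange l.length).map l.get = l := List.map_get_finRange l
  -- key rewriting: for any sublist x, x = map get (filter ...)
  have key : ∀ x : List α, x.Sublist l →
      ((List.finRange l.length).filter (fun i => l.get i ∈ x)).map l.get = x := by
    intro x hx
    have : ((List.finRange l.length).map l.get).filter (fun a => a ∈ x)
        = ((List.finRange l.length).filter (fun i => l.get i ∈ x)).map l.get := by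
      rw [List.filter_map]
      rfl
    rw [← this, hmapget, filter_mem_eq_of_sublist hl hx]
  refine ⟨⟨⟨fun x => Finset.univ.filter (fun i => l.get i ∈ x.1),
    fun s => ⟨((List.finRange l.length).filter (fun i => i ∈ s)).map l.get, ?_⟩,
    ?_, ?_⟩, ?_⟩⟩
  · have h1 : ((List.finRange l.length).filter (fun i => i ∈ s)).map l.get |>.Sublist
        ((List.finRange l.length).map l.get) :=
      (List.filter_sublist).map _
    rwa [hmapget] at h1
  · rintro ⟨x, hx⟩
    ext1
    simp only
    rw [show (fun i => decide (i ∈ Finset.filter (fun i => l.get i ∈ x) Finset.univ))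
        = (fun i => decide (l.get i ∈ x)) from funext fun i => by simp]
    exact key x hx
  · intro s
    ext i
    simp only [Finset.mem_filter, Finset.mem_univ, true_and, List.mem_map,
      List.mem_filter, List.mem_finRange, decide_eq_true_eq, true_and]
    constructor
    · rintro ⟨j, hj, hji⟩
      rwa [← hget hji]
    · intro hi
      exact ⟨i, hi, rfl⟩
  · rintro ⟨x, hx⟩ ⟨y, hy⟩
    simp only [Equiv.coe_fn_mk]
    constructor
    · intro h
      have hsub : ∀ a, a ∈ x → a ∈ y := by
        intro a hax
        have hal : a ∈ l := hx.subset hax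
        obtain ⟨i, hi⟩ := List.mem_iff_get.mp hal
        have : i ∈ Finset.univ.filter (fun i => l.get i ∈ x) :=
          Finset.mem_filter.mpr ⟨Finset.mem_univ _, hi ▸ hax⟩
        have := h this
        simp only [Finset.mem_filter] at this
        rw [← hi]
        exact this.2
      have h1 : l.filter (· ∈ x) |>.Sublist (l.filter (· ∈ y)) := by
        apply List.monotone_filter_right
        intro a
        simp only [decide_eq_true_eq]
        exact hsub a
      rwa [filter_mem_eq_of_sublist hl hx, filter_mem_eq_of_sublist hl hy] at h1
    · intro h i hi
      simp only [Finset.mem_filter, Finset.mem_univ, true_and] at hi ⊢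
      exact h.subset hi
end

section
/- Let n ≥ 2 be a natural number and let F be a nonempty finite family of subsets of Fin n, each of cardinality n−1, such that every element of Fin n belongs to some member of F; let m denote the number of members of F. Consider the subspace Z = ⋃_{σ ∈ F} { z : Fin n → ℂ | (∀ j ∈ σ, ‖z j‖ ≤ 1) ∧ (∀ j ∉ σ, ‖z j‖ = 1) } of the product space Fin n → ℂ, with the subspace topology. Then Z is homotopy equivalent to the (2m−1)-dimensional sphere, i.e. to the unit sphere in EuclideanSpace ℝ (Fin (2m)). -/
open Metric

noncomputable def sphereHomeoOfLinearEquiv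
    {E F : Type*} [NormedAddCommGroup E] [NormedSpace ℝ E]
    [NormedAddCommGroup F] [NormedSpace ℝ F]
    [FiniteDimensional ℝ E] [FiniteDimensional ℝ F]
    (L : E ≃ₗ[ℝ] F) :
    sphere (0 : E) 1 ≃ₜ sphere (0 : F) 1 := by
  have hL : Continuous L := L.toLinearMap.continuous_of_finiteDimensional
  have hL' : Continuous L.symm := L.symm.toLinearMap.continuous_of_finiteDimensional
  have key : ∀ (x : E), ‖x‖ = 1 → L x ≠ 0 := by
    intro x hx h0
    have : x = 0 := by
      have := congrArg L.symm h0
      simpa using this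
    rw [this] at hx; simp at hx
  have key' : ∀ (y : F), ‖y‖ = 1 → L.symm y ≠ 0 := by
    intro y hy h0
    have : y = 0 := by
      have := congrArg L h0
      simpa using this
    rw [this] at hy; simp at hy
  refine
    { toFun := fun x => ⟨‖L x.1‖⁻¹ • L x.1, ?_⟩
      invFun := fun y => ⟨‖L.symm y.1‖⁻¹ • L.symm y.1, ?_⟩
      left_inv := ?_
      right_inv := ?_
      continuous_toFun := ?_
      continuous_invFun := ?_ }
  · obtain ⟨x, hx⟩ := x
    rw [mem_sphere_zero_iff_norm] at hx ⊢
    rw [norm_smul, norm_inv, norm_norm]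
    exact inv_mul_cancel₀ (norm_ne_zero_iff.mpr (key x hx))
  · obtain ⟨y, hy⟩ := y
    rw [mem_sphere_zero_iff_norm] at hy ⊢
    rw [norm_smul, norm_inv, norm_norm]
    exact inv_mul_cancel₀ (norm_ne_zero_iff.mpr (key' y hy))
  · rintro ⟨x, hx⟩
    rw [mem_sphere_zero_iff_norm] at hx
    ext
    simp only [map_smul, LinearEquiv.symm_apply_apply]
    rw [norm_smul, norm_inv, norm_norm, hx, mul_one, inv_inv, smul_smul,
      mul_inv_cancel₀ (norm_ne_zero_iff.mpr (key x hx)), one_smul]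
  · rintro ⟨y, hy⟩
    rw [mem_sphere_zero_iff_norm] at hy
    ext
    simp only [map_smul, LinearEquiv.apply_symm_apply]
    rw [norm_smul, norm_inv, norm_norm, hy, mul_one, inv_inv, smul_smul,
      mul_inv_cancel₀ (norm_ne_zero_iff.mpr (key' y hy)), one_smul]
  · apply Continuous.subtype_mk
    exact ((hL.comp continuous_subtype_val).norm.inv₀
      (fun x => norm_ne_zero_iff.mpr (key x.1 (mem_sphere_zero_iff_norm.mp x.2)))).smul
      (hL.comp continuous_subtype_val)
  · apply Continuous.subtype_mk
    exact ((hL'.comp continuous_subtype_val).norm.inv₀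
      (fun y => norm_ne_zero_iff.mpr (key' y.1 (mem_sphere_zero_iff_norm.mp y.2)))).smul
      (hL'.comp continuous_subtype_val)

lemma pi_norm_eq_one_iff {ι : Type*} [Fintype ι] [Nonempty ι] (x : ι → ℂ) :
    ‖x‖ = 1 ↔ (∀ i, ‖x i‖ ≤ 1) ∧ ∃ i, ‖x i‖ = 1 := by
  constructor
  · intro h
    refine ⟨fun i => h ▸ norm_le_pi_norm x i, ?_⟩
    obtain ⟨i, -, hi⟩ := Finset.exists_max_image Finset.univ (fun i => ‖x i‖)
      Finset.univ_nonempty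
    refine ⟨i, le_antisymm (h ▸ norm_le_pi_norm x i) ?_⟩
    rw [← h]
    exact pi_norm_le_iff_of_nonneg (norm_nonneg _) |>.mpr fun j => hi j (Finset.mem_univ j)
  · rintro ⟨hle, i, hi⟩
    refine le_antisymm (pi_norm_le_iff_of_nonneg zero_le_one |>.mpr hle) ?_
    calc (1:ℝ) = ‖x i‖ := hi.symm
      _ ≤ ‖x‖ := norm_le_pi_norm x i

noncomputable def coreHomeo {n : ℕ} (S : Finset (Fin n)) (hS : S.Nonempty) :
    ↥{z : Fin n → ℂ | (∀ j, ‖z j‖ ≤ 1) ∧ (∃ i ∈ S, ‖z i‖ = 1) ∧ ∀ j ∉ S, z j = 0}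
      ≃ₜ sphere (0 : ↥S → ℂ) 1 := by
  haveI : Nonempty ↥S := ⟨⟨hS.choose, hS.choose_spec⟩⟩
  refine
    { toFun := fun z => ⟨fun i => z.1 i, ?_⟩
      invFun := fun w => ⟨fun j => if h : j ∈ S then w.1 ⟨j, h⟩ else 0, ?_⟩
      left_inv := ?_
      right_inv := ?_
      continuous_toFun := ?_
      continuous_invFun := ?_ }
  · obtain ⟨z, h1, ⟨i, hiS, hi⟩, h3⟩ := z
    rw [mem_sphere_zero_iff_norm, pi_norm_eq_one_iff]
    exact ⟨fun j => h1 j, ⟨i, hiS⟩, hi⟩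
  · obtain ⟨w, hw⟩ := w
    rw [mem_sphere_zero_iff_norm, pi_norm_eq_one_iff] at hw
    obtain ⟨h1, i, hi⟩ := hw
    refine ⟨fun j => ?_, ⟨i, i.2, by simp [i.2, hi]⟩, fun j hj => by simp [hj]⟩
    by_cases h : j ∈ S
    · simpa [h] using h1 ⟨j, h⟩
    · simp [h]
  · rintro ⟨z, h1, h2, h3⟩
    ext j
    by_cases h : j ∈ S <;> simp [h, h3 j]
  · rintro ⟨w, hw⟩
    ext i
    simp [i.2]
  · refine Continuous.subtype_mk (continuous_pi fun i => ?_) _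
    exact (continuous_apply ((i : Fin n))).comp continuous_subtype_val
  · refine Continuous.subtype_mk (continuous_pi fun j => ?_) _
    by_cases h : j ∈ S
    · simpa [h, Function.comp_def] using (continuous_apply (⟨j, h⟩ : ↥S)).comp continuous_subtype_val
    · simpa [h] using continuous_const

noncomputable def retractHtpyEquiv {n : ℕ} (S : Finset (Fin n)) :
    ContinuousMap.HomotopyEquiv
      ↥{z : Fin n → ℂ | (∀ j, ‖z j‖ ≤ 1) ∧ ∃ i ∈ S, ‖z i‖ = 1}
      ↥{z : Fin n → ℂ | (∀ j, ‖z j‖ ≤ 1) ∧ (∃ i ∈ S, ‖z i‖ = 1) ∧ ∀ j ∉ S, z j = 0} := by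
  classical
  set A := {z : Fin n → ℂ | (∀ j, ‖z j‖ ≤ 1) ∧ ∃ i ∈ S, ‖z i‖ = 1} with hA
  set B := {z : Fin n → ℂ | (∀ j, ‖z j‖ ≤ 1) ∧ (∃ i ∈ S, ‖z i‖ = 1) ∧ ∀ j ∉ S, z j = 0} with hB
  have hmemf : ∀ z ∈ A, (fun j => if j ∈ S then z j else 0) ∈ B := by
    rintro z ⟨h1, i, hiS, hi⟩
    refine ⟨fun j => ?_, ⟨i, hiS, by simp [hiS, hi]⟩, fun j hj => by simp [hj]⟩
    by_cases h : j ∈ S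
    · simpa [h] using h1 j
    · simp [h]
  have hcf : Continuous fun z : ↥A => (fun j => if j ∈ S then z.1 j else 0 : Fin n → ℂ) := by
    refine continuous_pi fun j => ?_
    by_cases h : j ∈ S
    · simpa [h, Function.comp_def] using (continuous_apply j).comp continuous_subtype_val
    · simpa [h] using continuous_const
  let f : C(↥A, ↥B) := ⟨fun z => ⟨fun j => if j ∈ S then z.1 j else 0, hmemf z.1 z.2⟩,
    Continuous.subtype_mk hcf _⟩
  have hBA : ∀ z ∈ B, z ∈ A := fun z hz => ⟨hz.1, hz.2.1⟩
  let g : C(↥B, ↥A) := ⟨fun z => ⟨z.1, hBA z.1 z.2⟩,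
    Continuous.subtype_mk continuous_subtype_val _⟩
  have hmemH : ∀ (t : unitInterval) (z : ↥A),
      (fun j => if j ∈ S then z.1 j else ((1:ℝ) - t.1) • z.1 j) ∈ A := by
    rintro t ⟨z, h1, i, hiS, hi⟩
    refine ⟨fun j => ?_, ⟨i, hiS, by simp [hiS, hi]⟩⟩
    by_cases h : j ∈ S
    · simpa [h] using h1 j
    · simp only [h, if_neg, if_false]
      rw [norm_smul, Real.norm_eq_abs, abs_of_nonneg (by linarith [t.2.2])]
      have h1t : (1:ℝ) - t.1 ≤ 1 := by linarith [t.2.1]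
      calc (1 - t.1) * ‖z j‖ ≤ 1 * 1 :=
        mul_le_mul h1t (h1 j) (norm_nonneg _) zero_le_one
      _ = 1 := one_mul 1
  let H : ContinuousMap.Homotopy (ContinuousMap.id ↥A) (g.comp f) := by
    refine
      { toFun := fun p => ⟨fun j => if j ∈ S then p.2.1 j else ((1:ℝ) - p.1.1) • p.2.1 j,
          hmemH p.1 p.2⟩
        continuous_toFun := ?_
        map_zero_left := ?_
        map_one_left := ?_ }
    · refine Continuous.subtype_mk (continuous_pi fun j => ?_) _
      by_cases h : j ∈ S
      · simpa [h, Function.comp_def] using (continuous_apply j).comp (continuous_subtype_val.comp continuous_snd)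
      · simp only [h, if_neg, if_false]
        exact ((continuous_const.sub
          (continuous_subtype_val.comp continuous_fst)).smul
          ((continuous_apply j).comp (continuous_subtype_val.comp continuous_snd)))
    · intro z
      ext j
      by_cases h : j ∈ S <;> simp [h]
    · intro z
      ext j
      by_cases h : j ∈ S <;> simp [h, f, g]
  have hfg : f.comp g = ContinuousMap.id ↥B := by
    ext z j
    by_cases h : j ∈ S
    · simp [f, g, h]
    · simp [f, g, h, z.2.2.2 j h]
  exact
    { toFun := f
      invFun := g
      left_inv := (ContinuousMap.Homotopic.refl _).trans ⟨H.symm⟩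
      right_inv := hfg ▸ ContinuousMap.Homotopic.refl _ }

/-- The moment-angle complex of a pure codimension-one subcomplex of
`∂Δ^{n-1}` on all `n` vertices, with `m` facets, is homotopy equivalent to
`S^{2m-1}`: the union over `σ ∈ F` of the blocks
`{z : Fin n → ℂ | ∀ j ∈ σ, ‖z j‖ ≤ 1 ∧ ∀ j ∉ σ, ‖z j‖ = 1}` is homotopy
equivalent to the unit sphere of `EuclideanSpace ℝ (Fin (2 * F.card))`. -/
theorem momentAngle_pure_codim_one_htpyEquiv_sphere (n : ℕ) (hn : 2 ≤ n)
    (F : Finset (Finset (Fin n))) (hF : F.Nonempty)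
    (hcard : ∀ σ ∈ F, σ.card = n - 1)
    (hcover : ∀ v : Fin n, ∃ σ ∈ F, v ∈ σ) :
    Nonempty
      (ContinuousMap.HomotopyEquiv
        (↥(⋃ σ ∈ F,
          {z : Fin n → ℂ | (∀ j ∈ σ, ‖z j‖ ≤ 1) ∧ ∀ j ∉ σ, ‖z j‖ = 1}))
        (Metric.sphere (0 : EuclideanSpace ℝ (Fin (2 * F.card))) 1)) := by
  classical
  set S : Finset (Fin n) := F.biUnion (fun σ => σᶜ) with hS
  -- each complement is a singleton
  have hcompl : ∀ σ ∈ F, ∃ i, σᶜ = {i} := by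
    intro σ hσ
    have : σᶜ.card = 1 := by
      rw [Finset.card_compl, hcard σ hσ, Fintype.card_fin]
      omega
    exact Finset.card_eq_one.mp this
  -- S.card = F.card
  have hScard : S.card = F.card := by
    rw [hS, Finset.card_biUnion]
    · have h1 : ∀ σ ∈ F, σᶜ.card = 1 := by
        intro σ hσ
        obtain ⟨i, hi⟩ := hcompl σ hσ
        simp [hi]
      rw [Finset.sum_congr rfl h1, Finset.sum_const, smul_eq_mul, mul_one]
    · intro σ hσ τ hτ hne
      obtain ⟨i, hi⟩ := hcompl σ hσ
      obtain ⟨j, hj⟩ := hcompl τ hτ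
      rw [Function.onFun_apply, hi, hj, Finset.disjoint_singleton]
      rintro rfl
      exact hne (compl_injective (hi.trans hj.symm))
  have hSne : S.Nonempty := by
    obtain ⟨σ, hσ⟩ := hF
    obtain ⟨i, hi⟩ := hcompl σ hσ
    exact ⟨i, Finset.mem_biUnion.mpr ⟨σ, hσ, by simp [hi]⟩⟩
  -- rewrite the union
  have hset : (⋃ σ ∈ F, {z : Fin n → ℂ | (∀ j ∈ σ, ‖z j‖ ≤ 1) ∧ ∀ j ∉ σ, ‖z j‖ = 1})
      = {z : Fin n → ℂ | (∀ j, ‖z j‖ ≤ 1) ∧ ∃ i ∈ S, ‖z i‖ = 1} := by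
    ext z
    simp only [Set.mem_iUnion, Set.mem_setOf_eq, exists_prop]
    constructor
    · rintro ⟨σ, hσ, hle, heq⟩
      obtain ⟨i, hi⟩ := hcompl σ hσ
      have hiσ : i ∉ σ := by
        have : i ∈ σᶜ := by simp [hi]
        simpa using this
      refine ⟨fun j => ?_, i, Finset.mem_biUnion.mpr ⟨σ, hσ, by simp [hi]⟩, heq i hiσ⟩
      by_cases h : j ∈ σ
      · exact hle j h
      · exact (heq j h).le
    · rintro ⟨hle, i, hiS, hi⟩
      obtain ⟨σ, hσ, hiσ⟩ := Finset.mem_biUnion.mp hiS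
      obtain ⟨i', hi'⟩ := hcompl σ hσ
      have : i = i' := by rw [hi'] at hiσ; simpa using hiσ
      subst this
      refine ⟨σ, hσ, fun j _ => hle j, fun j hj => ?_⟩
      have : j ∈ σᶜ := Finset.mem_compl.mpr hj
      rw [hi'] at this
      rw [Finset.mem_singleton.mp this]
      exact hi
  rw [hset]
  -- linear equivalence
  have hrank : Module.finrank ℝ (↥S → ℂ) =
      Module.finrank ℝ (EuclideanSpace ℝ (Fin (2 * F.card))) := by
    rw [Module.finrank_pi_fintype, finrank_euclideanSpace, Fintype.card_fin]
    simp [Complex.finrank_real_complex, Fintype.card_coe, hScard]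
    ring
  obtain ⟨L⟩ := FiniteDimensional.nonempty_linearEquiv_of_finrank_eq hrank
  exact ⟨((retractHtpyEquiv S).trans (coreHomeo S hSne).toHomotopyEquiv).trans
    (sphereHomeoOfLinearEquiv L).toHomotopyEquiv⟩
end
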